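/- Theorem 3.3 (equivalence of minimizers and weak solutions): Let u : Ω → ℝ be Lipschitz. Then u is a minimizer for 𝔉 if and only if u is a weak solution of div N(u) = H. -/

import Mathlib

open MeasureTheory
open scoped RealInnerProductSpace ENNReal

/-- `u` is a minimizer for the generalized p-area functional
`𝔉(v) = ∫_Ω (|∇v + F⃗| + H v)`: for every test function `φ`
(a Lipschitz function with compact support contained in `Ω`) one has `𝔉(u) ≤ 𝔉(u + φ)`
(Lebesgue-a.e., `∇(u+φ) = ∇u + ∇φ`). -/
def IsPMinimizer {m : ℕ} (Ω : Set (EuclideanSpace ℝ (Fin m)))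
    (F : EuclideanSpace ℝ (Fin m) → EuclideanSpace ℝ (Fin m))
    (H : EuclideanSpace ℝ (Fin m) → ℝ) (u : EuclideanSpace ℝ (Fin m) → ℝ) : Prop :=
  ∀ φ : EuclideanSpace ℝ (Fin m) → ℝ, (∃ K, LipschitzWith K φ) →
    HasCompactSupport φ → tsupport φ ⊆ Ω →
    (∫ x in Ω, (‖gradient u x + F x‖ + H x * u x)) ≤
      ∫ x in Ω, (‖gradient u x + gradient φ x + F x‖ + H x * (u x + φ x))

/-- `u` is a weak solution of `div N(u) = H`, where `N(u) = (∇u + F⃗)/|∇u + F⃗|`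
on `Ω ∖ S(u)` and `S(u) = {x ∈ Ω : ∇u + F⃗ = 0}`: for every test function `φ`,
`∫_{S(u)} |∇φ| + ∫_{Ω∖S(u)} N(u)·∇φ + ∫_Ω H φ ≥ 0`. -/
def IsPWeakSolution {m : ℕ} (Ω : Set (EuclideanSpace ℝ (Fin m)))
    (F : EuclideanSpace ℝ (Fin m) → EuclideanSpace ℝ (Fin m))
    (H : EuclideanSpace ℝ (Fin m) → ℝ) (u : EuclideanSpace ℝ (Fin m) → ℝ) : Prop :=
  ∀ φ : EuclideanSpace ℝ (Fin m) → ℝ, (∃ K, LipschitzWith K φ) →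
    HasCompactSupport φ → tsupport φ ⊆ Ω →
    0 ≤ (∫ x in {x ∈ Ω | gradient u x + F x = 0}, ‖gradient φ x‖) +
        (∫ x in Ω \ {x ∈ Ω | gradient u x + F x = 0},
          ⟪‖gradient u x + F x‖⁻¹ • (gradient u x + F x), gradient φ x⟫) +
        ∫ x in Ω, H x * φ x

/-!
Write `a = ∇u + F⃗` and `b = ∇φ`. Since `t ↦ ‖a + t • b‖` is convex, its right derivative at
`0`, namely `|b|` if `a = 0` and `N(u) · b` otherwise, is bounded above by `‖a + b‖ - ‖a‖`;
integrating shows that a weak solution is a minimizer. Conversely, if `u` is a minimizer then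
`(𝔉(u + tφ) - 𝔉(u)) / t ≥ 0` for `t > 0`, and these difference quotients are dominated by
`|∇φ|`, so letting `t → 0⁺` yields the weak inequality.
-/

open Filter Set
open scoped Topology NNReal

section NormRightDeriv

variable {E : Type*} [NormedAddCommGroup E] [InnerProductSpace ℝ E]

open Classical in
noncomputable def normRightDeriv (a b : E) : ℝ :=
  if a = 0 then ‖b‖ else ⟪‖a‖⁻¹ • a, b⟫

lemma abs_normRightDeriv_le (a b : E) : |normRightDeriv a b| ≤ ‖b‖ := by
  rw [normRightDeriv]
  split_ifs with ha
  · rw [abs_norm]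
  · calc |⟪‖a‖⁻¹ • a, b⟫| ≤ ‖‖a‖⁻¹ • a‖ * ‖b‖ := abs_real_inner_le_norm _ _
      _ = ‖b‖ := by
        rw [norm_smul, norm_inv, norm_norm, inv_mul_cancel₀ (norm_ne_zero_iff.mpr ha), one_mul]

lemma normRightDeriv_smul_right (a b : E) {t : ℝ} (ht : 0 ≤ t) :
    normRightDeriv a (t • b) = t * normRightDeriv a b := by
  rw [normRightDeriv, normRightDeriv]
  split_ifs
  · rw [norm_smul, Real.norm_of_nonneg ht]
  · rw [real_inner_smul_right]

lemma normRightDeriv_le_norm_add_sub_norm (a b : E) : normRightDeriv a b ≤ ‖a + b‖ - ‖a‖ := by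
  rw [normRightDeriv]
  split_ifs with ha
  · simp [ha]
  · have hpos : 0 < ‖a‖ := norm_pos_iff.mpr ha
    have hcs : ⟪a, a + b⟫ ≤ ‖a‖ * ‖a + b‖ := real_inner_le_norm a (a + b)
    rw [inner_add_right, real_inner_self_eq_norm_sq] at hcs
    rw [real_inner_smul_left, inv_mul_le_iff₀ hpos]
    nlinarith

lemma hasDerivAt_norm_add_smul {a : E} (ha : a ≠ 0) (b : E) :
    HasDerivAt (fun t : ℝ => ‖a + t • b‖) ⟪‖a‖⁻¹ • a, b⟫ 0 := by
  have h :=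
    (((hasDerivAt_id (0 : ℝ)).smul_const b).const_add a).norm_sq.sqrt (by simpa using ha)
  simp only [Real.sqrt_sq (norm_nonneg _), id, zero_smul, add_zero, one_smul] at h
  convert h using 1
  rw [real_inner_smul_left]
  field_simp

lemma tendsto_slope_norm_add_smul (a b : E) :
    Tendsto (fun t : ℝ => t⁻¹ * (‖a + t • b‖ - ‖a‖)) (𝓝[>] 0) (𝓝 (normRightDeriv a b)) := by
  by_cases ha : a = 0
  · subst ha
    rw [normRightDeriv, if_pos rfl]
    refine tendsto_const_nhds.congr' (eventually_nhdsWithin_of_forall fun t (ht : 0 < t) => ?_)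
    simp [norm_smul, abs_of_pos ht, ht.ne']
  · rw [normRightDeriv, if_neg ha]
    simpa using (hasDerivAt_norm_add_smul ha b).tendsto_slope_zero_right

lemma abs_slope_norm_add_smul_le (a b : E) (t : ℝ) :
    |t⁻¹ * (‖a + t • b‖ - ‖a‖)| ≤ ‖b‖ := by
  rcases eq_or_ne t 0 with rfl | ht
  · simp
  have h := abs_norm_sub_norm_le (a + t • b) a
  rw [add_sub_cancel_left, norm_smul, Real.norm_eq_abs] at h
  rw [abs_mul, abs_inv, inv_mul_le_iff₀ (abs_pos.mpr ht)]
  exact h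

variable [MeasurableSpace E] [BorelSpace E] [SecondCountableTopology E]

lemma measurable_normRightDeriv : Measurable fun p : E × E => normRightDeriv p.1 p.2 := by
  classical
  unfold normRightDeriv
  exact Measurable.ite (measurable_fst (measurableSet_singleton 0)) measurable_snd.norm
    ((measurable_fst.norm.inv.smul measurable_fst).inner measurable_snd)

end NormRightDeriv

section Integral

variable {α : Type*} [MeasurableSpace α] {μ : Measure α}

lemma integrable_norm_add_sub_norm {E : Type*} [NormedAddCommGroup E] {a b : α → E}
    (ha : AEStronglyMeasurable a μ) (hb : Integrable b μ) :
    Integrable (fun x => ‖a x + b x‖ - ‖a x‖) μ :=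
  hb.norm.mono' ((ha.add hb.aestronglyMeasurable).norm.sub ha.norm) (ae_of_all _ fun x => by
    simpa using abs_norm_sub_norm_le (a x + b x) (a x))

variable {E : Type*} [NormedAddCommGroup E] [InnerProductSpace ℝ E] {a b : α → E}

lemma tendsto_integral_slope_norm_add_smul (ha : AEStronglyMeasurable a μ)
    (hb : Integrable b μ) :
    Tendsto (fun t : ℝ => ∫ x, t⁻¹ * (‖a x + t • b x‖ - ‖a x‖) ∂μ) (𝓝[>] 0)
      (𝓝 (∫ x, normRightDeriv (a x) (b x) ∂μ)) :=
  tendsto_integral_filter_of_dominated_convergence (fun x => ‖b x‖)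
    (Eventually.of_forall fun t =>
      ((ha.add (hb.aestronglyMeasurable.const_smul t)).norm.sub ha.norm).const_mul _)
    (Eventually.of_forall fun t => ae_of_all _ fun x => abs_slope_norm_add_smul_le (a x) (b x) t)
    hb.norm (ae_of_all _ fun x => tendsto_slope_norm_add_smul (a x) (b x))

variable [MeasurableSpace E] [BorelSpace E] [SecondCountableTopology E]

lemma integrable_normRightDeriv (ha : AEStronglyMeasurable a μ) (hb : Integrable b μ) :
    Integrable (fun x => normRightDeriv (a x) (b x)) μ :=
  hb.norm.mono'
    (measurable_normRightDeriv.comp_aemeasurable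
      (ha.aemeasurable.prodMk hb.aemeasurable)).aestronglyMeasurable
    (ae_of_all _ fun x => abs_normRightDeriv_le (a x) (b x))

theorem forall_pos_integral_norm_add_smul_sub_iff (ha : AEStronglyMeasurable a μ)
    (hb : Integrable b μ) (c : ℝ) :
    (∀ t > 0, 0 ≤ ∫ x, (‖a x + t • b x‖ - ‖a x‖) ∂μ + t * c) ↔
      0 ≤ ∫ x, normRightDeriv (a x) (b x) ∂μ + c := by
  constructor
  · intro h
    refine ge_of_tendsto ((tendsto_integral_slope_norm_add_smul ha hb).add_const c)
      (eventually_nhdsWithin_of_forall fun t (ht : 0 < t) => ?_)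
    have := mul_nonneg (inv_nonneg.mpr ht.le) (h t ht)
    rwa [mul_add, ← integral_const_mul, inv_mul_cancel_left₀ ht.ne'] at this
  · intro h t ht
    have hmono :
        t * ∫ x, normRightDeriv (a x) (b x) ∂μ ≤ ∫ x, (‖a x + t • b x‖ - ‖a x‖) ∂μ := by
      rw [← integral_const_mul]
      refine integral_mono (integrable_normRightDeriv ha hb |>.const_mul t)
        (integrable_norm_add_sub_norm ha (hb.smul t)) fun x => ?_
      rw [← normRightDeriv_smul_right _ _ ht.le]
      exact normRightDeriv_le_norm_add_sub_norm _ _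
    nlinarith [mul_nonneg ht.le h]

lemma setIntegral_normRightDeriv {s : Set α} (hs : MeasurableSet s)
    (ha : AEStronglyMeasurable a (μ.restrict s)) (hb : Integrable b (μ.restrict s)) :
    ∫ x in s, normRightDeriv (a x) (b x) ∂μ =
      (∫ x in {x ∈ s | a x = 0}, ‖b x‖ ∂μ) +
        ∫ x in s \ {x ∈ s | a x = 0}, ⟪‖a x‖⁻¹ • a x, b x⟫ ∂μ := by
  have hzero : NullMeasurableSet {x | a x = 0} (μ.restrict s) :=
    ha.nullMeasurableSet_eq_fun aestronglyMeasurable_const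
  have hsep : {x ∈ s | a x = 0} = {x | a x = 0} ∩ s := by ext; simp [and_comm]
  have hdiff : s \ {x ∈ s | a x = 0} = {x | a x = 0}ᶜ ∩ s := by ext; simp [and_comm]
  rw [← integral_add_compl₀ hzero (integrable_normRightDeriv ha hb), hdiff, hsep,
    ← Measure.restrict_restrict' hs, ← Measure.restrict_restrict' hs]
  congr 1
  · refine setIntegral_congr_ae₀ hzero (ae_of_all _ fun x (hx : a x = 0) => ?_)
    rw [normRightDeriv, if_pos hx]
  · refine setIntegral_congr_ae₀ hzero.compl (ae_of_all _ fun x (hx : a x ≠ 0) => ?_)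
    rw [normRightDeriv, if_neg hx]

end Integral

section TestFunction

variable {X : Type*} [PseudoMetricSpace X]

def IsTestFunction (Ω : Set X) (φ : X → ℝ) : Prop :=
  (∃ K, LipschitzWith K φ) ∧ HasCompactSupport φ ∧ tsupport φ ⊆ Ω

variable {Ω : Set X} {φ : X → ℝ}

lemma IsTestFunction.const_smul (hφ : IsTestFunction Ω φ) (c : ℝ) :
    IsTestFunction Ω (c • φ) := by
  obtain ⟨⟨K, hK⟩, hc, hΩ⟩ := hφ
  exact ⟨⟨_, (lipschitzWith_smul c).comp hK⟩, hc.smul_left,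
    (tsupport_smul_subset_right (fun _ => c) φ).trans hΩ⟩

lemma forall_isTestFunction_iff_forall_pos_smul {P : (X → ℝ) → Prop} :
    (∀ φ, IsTestFunction Ω φ → P φ) ↔ ∀ φ, IsTestFunction Ω φ → ∀ t : ℝ, 0 < t → P (t • φ) :=
  ⟨fun h φ hφ t _ => h _ (hφ.const_smul t), fun h φ hφ => by simpa using h φ hφ 1 one_pos⟩

lemma IsTestFunction.integrable_mul [MeasurableSpace X] [OpensMeasurableSpace X] {μ : Measure X}
    (hφ : IsTestFunction Ω φ) {H : X → ℝ} (hH : Integrable H μ) :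
    Integrable (fun x => H x * φ x) μ := by
  obtain ⟨⟨K, hK⟩, hc, -⟩ := hφ
  obtain ⟨C, hC⟩ := hK.continuous.bounded_above_of_compact_support hc
  exact hH.mul_bdd hK.continuous.aestronglyMeasurable (ae_of_all _ hC)

end TestFunction

section Gradient

variable {E : Type*} [NormedAddCommGroup E] [InnerProductSpace ℝ E] [CompleteSpace E]

lemma gradient_const_smul (c : ℝ) (f : E → ℝ) : gradient (c • f) = c • gradient f := by
  ext1 x
  simp [gradient, fderiv_const_smul_field]

lemma norm_gradient_le_of_lipschitzOn {f : E → ℝ} {s : Set E} {x : E} {K : ℝ≥0}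
    (hs : s ∈ 𝓝 x) (hf : LipschitzOnWith K f s) : ‖gradient f x‖ ≤ K := by
  rw [gradient, LinearIsometryEquiv.norm_map]
  exact norm_fderiv_le_of_lipschitzOn ℝ hs hf

variable [MeasurableSpace E] [BorelSpace E]

lemma measurable_gradient (f : E → ℝ) : Measurable (gradient f) :=
  (InnerProductSpace.toDual ℝ E).symm.continuous.measurable.comp (measurable_fderiv ℝ f)

variable [SecondCountableTopology E]

lemma integrable_gradient_of_lipschitzOn {μ : Measure E} {Ω : Set E}
    [IsFiniteMeasure (μ.restrict Ω)] (hΩ : IsOpen Ω) {f : E → ℝ} {K : ℝ≥0}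
    (hf : LipschitzOnWith K f Ω) :
    Integrable (gradient f) (μ.restrict Ω) :=
  .of_bound (measurable_gradient f).aestronglyMeasurable K <|
    ae_restrict_of_forall_mem hΩ.measurableSet fun _ hx =>
      norm_gradient_le_of_lipschitzOn (hΩ.mem_nhds hx) hf

lemma IsTestFunction.integrable_gradient {μ : Measure E} [IsFiniteMeasure μ] {Ω : Set E}
    {φ : E → ℝ} (hφ : IsTestFunction Ω φ) : Integrable (gradient φ) μ := by
  obtain ⟨⟨K, hK⟩, -, -⟩ := hφ
  exact .of_bound (measurable_gradient φ).aestronglyMeasurable K <|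
    ae_of_all _ fun _ => norm_gradient_le_of_lipschitzOn univ_mem hK.lipschitzOnWith

end Gradient

lemma LipschitzOnWith.integrable_mul {X : Type*} [PseudoMetricSpace X] [MeasurableSpace X]
    [OpensMeasurableSpace X] {μ : Measure X} {s : Set X}
    (hs : MeasurableSet s) (hsb : Bornology.IsBounded s) {u : X → ℝ} {K : ℝ≥0}
    (hu : LipschitzOnWith K u s) {H : X → ℝ} (hH : Integrable H (μ.restrict s)) :
    Integrable (fun x => H x * u x) (μ.restrict s) := by
  obtain ⟨g, hg, hug⟩ := hu.extend_real
  obtain ⟨C, hC⟩ := (hg.isBounded_image hsb).exists_norm_le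
  refine hH.mul_bdd (hu.continuousOn.aestronglyMeasurable hs) (c := C) ?_
  exact ae_restrict_of_forall_mem hs fun x hx => hug hx ▸ hC _ (mem_image_of_mem g hx)

section PArea

variable {m : ℕ} {Ω : Set (EuclideanSpace ℝ (Fin m))}
  {F : EuclideanSpace ℝ (Fin m) → EuclideanSpace ℝ (Fin m)}
  {H u : EuclideanSpace ℝ (Fin m) → ℝ} [IsFiniteMeasure (volume.restrict Ω)]

lemma isPMinimizer_iff (ha : Integrable (fun x => gradient u x + F x) (volume.restrict Ω))
    (hH : Integrable H (volume.restrict Ω))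
    (hHu : Integrable (fun x => H x * u x) (volume.restrict Ω)) :
    IsPMinimizer Ω F H u ↔ ∀ φ, IsTestFunction Ω φ →
      0 ≤ (∫ x in Ω, (‖gradient u x + F x + gradient φ x‖ - ‖gradient u x + F x‖)) +
        ∫ x in Ω, H x * φ x := by
  simp only [IsPMinimizer, IsTestFunction, and_imp]
  refine forall_congr' fun φ => forall₃_congr fun hlip hc hsupp => ?_
  have hφ : IsTestFunction Ω φ := ⟨hlip, hc, hsupp⟩
  have hsplit : ∫ x in Ω, (‖gradient u x + gradient φ x + F x‖ + H x * (u x + φ x)) =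
      ((∫ x in Ω, (‖gradient u x + F x + gradient φ x‖ - ‖gradient u x + F x‖)) +
        ∫ x in Ω, H x * φ x) + ∫ x in Ω, (‖gradient u x + F x‖ + H x * u x) := by
    have hD := integrable_norm_add_sub_norm ha.aestronglyMeasurable hφ.integrable_gradient
    have hHφ := hφ.integrable_mul hH
    rw [← integral_add hD hHφ, ← integral_add (by exact hD.add hHφ) (by exact ha.norm.add hHu)]
    congr 1 with x
    rw [add_right_comm]
    ring
  rw [hsplit, le_add_iff_nonneg_left]

lemma isPWeakSolution_iff (hΩ : MeasurableSet Ω)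
    (ha : AEStronglyMeasurable (fun x => gradient u x + F x) (volume.restrict Ω)) :
    IsPWeakSolution Ω F H u ↔ ∀ φ, IsTestFunction Ω φ →
      0 ≤ (∫ x in Ω, normRightDeriv (gradient u x + F x) (gradient φ x)) +
        ∫ x in Ω, H x * φ x := by
  simp only [IsPWeakSolution, IsTestFunction, and_imp]
  refine forall_congr' fun φ => forall₃_congr fun hlip hc hsupp => ?_
  rw [setIntegral_normRightDeriv hΩ ha (IsTestFunction.integrable_gradient ⟨hlip, hc, hsupp⟩)]

end PArea

theorem isPMinimizer_iff_isPWeakSolution_general {m : ℕ}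
    (Ω : Set (EuclideanSpace ℝ (Fin m)))
    (hΩopen : IsOpen Ω) (hΩbdd : Bornology.IsBounded Ω)
    (F : EuclideanSpace ℝ (Fin m) → EuclideanSpace ℝ (Fin m))
    (hF : IntegrableOn F Ω volume)
    (H : EuclideanSpace ℝ (Fin m) → ℝ)
    (hH : MemLp H ⊤ (volume.restrict Ω))
    (u : EuclideanSpace ℝ (Fin m) → ℝ) (hu : ∃ K, LipschitzOnWith K u Ω) :
    IsPMinimizer Ω F H u ↔ IsPWeakSolution Ω F H u := by
  obtain ⟨K, hK⟩ := hu
  have : IsFiniteMeasure (volume.restrict Ω) :=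
    isFiniteMeasure_restrict.mpr hΩbdd.measure_lt_top.ne
  have hHint : Integrable H (volume.restrict Ω) := hH.integrable le_top
  have ha : Integrable (fun x => gradient u x + F x) (volume.restrict Ω) :=
    (integrable_gradient_of_lipschitzOn hΩopen hK).add hF
  rw [isPMinimizer_iff ha hHint (hK.integrable_mul hΩopen.measurableSet hΩbdd hHint),
    isPWeakSolution_iff hΩopen.measurableSet ha.aestronglyMeasurable,
    forall_isTestFunction_iff_forall_pos_smul]
  refine forall₂_congr fun φ hφ => ?_
  simp only [gradient_const_smul, Pi.smul_apply, smul_eq_mul, mul_left_comm (H _),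
    integral_const_mul]
  exact forall_pos_integral_norm_add_smul_sub_iff ha.aestronglyMeasurable
    hφ.integrable_gradient _

/-- **Theorem 3.3**: a Lipschitz function `u` is a minimizer for `𝔉` if and only if it is
a weak solution of `div N(u) = H`. -/
theorem isPMinimizer_iff_isPWeakSolution {m : ℕ} (hm : 1 ≤ m)
    (Ω : Set (EuclideanSpace ℝ (Fin m)))
    (hΩopen : IsOpen Ω) (hΩbdd : Bornology.IsBounded Ω)
    (hΩne : Ω.Nonempty) (hΩconn : IsConnected Ω)
    (F : EuclideanSpace ℝ (Fin m) → EuclideanSpace ℝ (Fin m))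
    (hF : IntegrableOn F Ω volume)
    (H : EuclideanSpace ℝ (Fin m) → ℝ)
    (hH : MemLp H ⊤ (volume.restrict Ω))
    (u : EuclideanSpace ℝ (Fin m) → ℝ) (hu : ∃ K, LipschitzOnWith K u Ω) :
    IsPMinimizer Ω F H u ↔ IsPWeakSolution Ω F H u :=
  isPMinimizer_iff_isPWeakSolution_general Ω hΩopen hΩbdd F hF H hH u hu
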